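/- The assignment X_ℓ ↦ x_ℓ^{p^{r−ℓ−1}}, Y_ℓ ↦ y_ℓ^{p^{r−ℓ−1}} (0 ≤ ℓ < r) sends every generator of J_r to zero in Q_r, hence induces a k-algebra homomorphism θ̄_r : B_r/J_r → Q_r. Moreover θ̄_r is injective, and Q_r is a finitely generated module over the image of θ̄_r (i.e., θ̄_r is a finite map of integral domains). -/

import Mathlib

open MvPolynomial

/-- The ideal `J_r ⊆ B_r = k[X_0,…,X_{r-1},Y_0,…,Y_{r-1}]` generated by the elements
`X_ℓ·Y_{ℓ'} − X_{ℓ'}·Y_ℓ` for `0 ≤ ℓ < ℓ' < r`; `Sum.inl ℓ` is `X_ℓ` and `Sum.inr ℓ` is `Y_ℓ`. -/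
noncomputable def Jideal (k : Type*) [CommRing k] (r : ℕ) :
    Ideal (MvPolynomial (Fin r ⊕ Fin r) k) :=
  Ideal.span { f | ∃ ℓ ℓ' : Fin r, ℓ < ℓ' ∧
    f = X (Sum.inl ℓ) * X (Sum.inr ℓ') - X (Sum.inl ℓ') * X (Sum.inr ℓ) }

/-- The ideal of relations defining `Q_r`: it is generated by the elements
`x_ℓ^{p^{ℓ'−ℓ}}·y_{ℓ'} − y_ℓ^{p^{ℓ'−ℓ}}·x_{ℓ'}` for all `0 ≤ ℓ < ℓ' < r`, where `Sum.inl ℓ`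
is `x_ℓ` and `Sum.inr ℓ` is `y_ℓ`. -/
noncomputable def Qrel (k : Type*) [CommRing k] (p r : ℕ) :
    Ideal (MvPolynomial (Fin r ⊕ Fin r) k) :=
  Ideal.span { f | ∃ ℓ ℓ' : Fin r, ℓ < ℓ' ∧
    f = X (Sum.inl ℓ) ^ p ^ ((ℓ' : ℕ) - (ℓ : ℕ)) * X (Sum.inr ℓ') -
        X (Sum.inr ℓ) ^ p ^ ((ℓ' : ℕ) - (ℓ : ℕ)) * X (Sum.inl ℓ') }

/-- The `k`-algebra map `B_r → Q_r` sending `X_ℓ ↦ x_ℓ^{p^{r−ℓ−1}}` and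
`Y_ℓ ↦ y_ℓ^{p^{r−ℓ−1}}`. -/
noncomputable def thetaAux (k : Type*) [CommRing k] (p r : ℕ) :
    MvPolynomial (Fin r ⊕ Fin r) k →ₐ[k] (MvPolynomial (Fin r ⊕ Fin r) k ⧸ Qrel k p r) :=
  aeval fun i =>
    Ideal.Quotient.mk (Qrel k p r) (X i) ^ p ^ (r - Sum.elim Fin.val Fin.val i - 1)

/-!
Composing `θ` with the parametrization `Q_r → k[t, s_0, …, s_{r-1}]`, `x_ℓ ↦ s_ℓ`,
`y_ℓ ↦ t^{p^ℓ} s_ℓ`, gives the monomial map `X_ℓ ↦ s_ℓ^{p^{r-ℓ-1}}`,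
`Y_ℓ ↦ t^{p^{r-1}} s_ℓ^{p^{r-ℓ-1}}`. The kernel of a monomial map is spanned by the binomials
`X^m - X^{m'}` with `m, m'` of equal image, which here means equal total `Y`-degree and equal
degree in each pair `X_ℓ, Y_ℓ`. Such monomials are connected by exchanges `X_j Y_i ↦ X_i Y_j`,
which hold modulo `J_r`, so the kernel lies in `J_r` and `θ̄` is injective. Finiteness holds
because the generators `x_ℓ, y_ℓ` of `Q_r` have `p^{r-ℓ-1}`-st powers in the image of `θ̄`.
-/

namespace MvPolynomial

variable {R σ τ : Type*} [CommRing R]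

theorem aeval_monomial_one_monomial (e : σ → τ →₀ ℕ) (u : σ →₀ ℕ) (c : R) :
    aeval (fun i => monomial (e i) (1 : R)) (monomial u c) =
      monomial (Finsupp.linearCombination ℕ e u) c := by
  simp only [aeval_monomial, monomial_pow, one_pow, Finsupp.linearCombination_apply,
    monomial_finsupp_sum_index, algebraMap_eq]

theorem mem_of_map_eq_zero_of_monomial_sub_mem (φ : MvPolynomial σ R →ₗ[R] MvPolynomial τ R)
    (E : (σ →₀ ℕ) → τ →₀ ℕ) (hφ : ∀ u c, φ (monomial u c) = monomial (E u) c)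
    {I : Ideal (MvPolynomial σ R)} (hI : ∀ u v, E u = E v → monomial u 1 - monomial v 1 ∈ I)
    {f : MvPolynomial σ R} (hf : φ f = 0) : f ∈ I := by
  -- `ρ` sends `X^d` to a monomial in the fibre of `E` over `d`, so `g - ρ (φ g)` is a
  -- combination of binomials with equal images.
  let ρ := (basisMonomials τ R).constr R fun d => monomial (Function.invFun E d) (1 : R)
  have hρ : ∀ d c, ρ (monomial d c) = monomial (Function.invFun E d) c := by
    intro d c
    have h := (basisMonomials τ R).constr_basis R
      (fun d => monomial (Function.invFun E d) (1 : R)) d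
    simp only [coe_basisMonomials] at h
    rw [← mul_one c, ← smul_eq_mul, ← smul_monomial, map_smul, h, smul_monomial]
  suffices ∀ g, g - ρ (φ g) ∈ I by simpa [hf] using this f
  intro g
  induction g using MvPolynomial.induction_on' with
  | monomial u c =>
    rw [hφ, hρ, ← mul_one c, ← smul_eq_mul, ← smul_monomial, ← smul_monomial, ← smul_sub]
    exact Submodule.smul_of_tower_mem _ c (hI _ _ (Function.invFun_eq ⟨u, rfl⟩).symm)
  | add g₁ g₂ h₁ h₂ =>
    rw [map_add, map_add, add_sub_add_comm]
    exact add_mem h₁ h₂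

end MvPolynomial

theorem AlgHom.finite_of_pow_mem_range {R A B : Type*} [CommRing R] [CommRing A] [CommRing B]
    [Algebra R A] [Algebra R B] (f : A →ₐ[R] B) {s : Set B} (hs : s.Finite)
    (hgen : Algebra.adjoin R s = ⊤) (hpow : ∀ x ∈ s, ∃ n, 0 < n ∧ x ^ n ∈ f.range) :
    f.Finite := by
  let _ : Algebra A B := f.toAlgebra
  have : IsScalarTower R A B := IsScalarTower.of_algebraMap_eq' f.comp_algebraMap.symm
  have hint : ∀ x ∈ s, IsIntegral A x := by
    intro x hx
    obtain ⟨n, hn, a, ha⟩ := hpow x hx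
    exact IsIntegral.of_pow hn (ha ▸ isIntegral_algebraMap)
  have htop : Algebra.adjoin A s = ⊤ := Subalgebra.restrictScalars_injective R <| by
    rw [Algebra.Subalgebra.restrictScalars_adjoin, hgen, sup_top_eq, Subalgebra.restrictScalars_top]
  have hfg : (⊤ : Submodule A B).FG := by
    rw [← Algebra.top_toSubmodule, ← htop]
    exact fg_adjoin_of_finite hs hint
  exact (⟨hfg⟩ : Module.Finite A B)

theorem Ideal.Quotient.adjoin_range_mk_X {R σ : Type*} [CommRing R]
    (I : Ideal (MvPolynomial σ R)) :
    Algebra.adjoin R (Set.range fun i => Ideal.Quotient.mk I (X i)) = ⊤ := by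
  have : (Set.range fun i => Ideal.Quotient.mk I (X i)) =
      Ideal.Quotient.mkₐ R I '' Set.range X := by
    rw [← Set.range_comp]
    rfl
  rw [this, ← AlgHom.map_adjoin, adjoin_range_X, Algebra.map_top, AlgHom.range_eq_top]
  exact Ideal.Quotient.mkₐ_surjective R I

-- In `k[t, s_0, …, s_{r-1}] = MvPolynomial (Option (Fin r)) k`,
-- `none` is `t` and `some ℓ` is `s_ℓ`.
noncomputable def paramExp (p r : ℕ) : Fin r ⊕ Fin r → Option (Fin r) →₀ ℕ
  | .inl ℓ => Finsupp.single (some ℓ) (p ^ (r - ℓ - 1))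
  | .inr ℓ => Finsupp.single none (p ^ (r - 1)) + Finsupp.single (some ℓ) (p ^ (r - ℓ - 1))

noncomputable def paramVal (k : Type*) [CommRing k] (p r : ℕ) :
    Fin r ⊕ Fin r → MvPolynomial (Option (Fin r)) k
  | .inl ℓ => X (some ℓ)
  | .inr ℓ => X none ^ p ^ (ℓ : ℕ) * X (some ℓ)

section

variable {k : Type*} [CommRing k] {p r : ℕ}

theorem X_inl_mul_X_inr_sub_mem_Jideal (i j : Fin r) :
    (X (.inl i) * X (.inr j) - X (.inl j) * X (.inr i) : MvPolynomial (Fin r ⊕ Fin r) k) ∈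
      Jideal k r := by
  rcases lt_trichotomy i j with h | rfl | h
  · exact Ideal.subset_span ⟨i, j, h, rfl⟩
  · simp
  · rw [← neg_sub]
    exact neg_mem (Ideal.subset_span ⟨j, i, h, rfl⟩)

theorem monomial_sub_monomial_mem_Jideal {m m' : Fin r ⊕ Fin r →₀ ℕ}
    (hY : ∑ ℓ, m (.inr ℓ) = ∑ ℓ, m' (.inr ℓ))
    (hd : ∀ ℓ, m (.inl ℓ) + m (.inr ℓ) = m' (.inl ℓ) + m' (.inr ℓ)) :
    monomial m (1 : k) - monomial m' 1 ∈ Jideal k r := by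
  -- Exchange `X_j Y_i` in `m` for `X_i Y_j` and cancel the factor `Y_j` now common with `m'`.
  induction m' using WellFoundedLT.induction generalizing m with
  | _ m' ih =>
  by_cases hj : ∃ j, m (.inr j) < m' (.inr j)
  swap
  · push Not at hj
    have hYeq := (Finset.sum_eq_sum_iff_of_le fun ℓ _ => hj ℓ).1 hY.symm
    have hm : m = m' := by
      ext (ℓ | ℓ)
      · have := hd ℓ
        have := hYeq ℓ (Finset.mem_univ _)
        omega
      · exact (hYeq ℓ (Finset.mem_univ _)).symm
    simp [hm]
  obtain ⟨j, hj⟩ := hj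
  obtain ⟨i, hi⟩ : ∃ i, m' (.inr i) < m (.inr i) := by
    by_contra! h
    have := (Finset.sum_eq_sum_iff_of_le fun ℓ _ => h ℓ).1 hY j (Finset.mem_univ _)
    omega
  obtain ⟨c, rfl⟩ := le_iff_exists_add'.1 (Finsupp.single_le_iff.2 (by omega : 1 ≤ m' (.inr j)))
  obtain ⟨b, rfl⟩ := le_iff_exists_add'.1 (Finsupp.single_le_iff.2 (by omega : 1 ≤ m (.inr i)))
  have hbj : 1 ≤ b (.inl j) := by
    have hdj := hd j
    simp only [Finsupp.add_apply, Finsupp.single_apply, reduceCtorEq, ↓reduceIte] at hdj hj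
    omega
  obtain ⟨b, rfl⟩ := le_iff_exists_add'.1 (Finsupp.single_le_iff.2 hbj)
  have hc : c < c + Finsupp.single (.inr j) 1 :=
    lt_add_of_pos_right c (pos_iff_ne_zero.2 (by simp))
  have key := ih c hc (m := b + Finsupp.single (.inl i) 1) (by
      simp only [Finsupp.add_apply, Finsupp.single_apply, reduceCtorEq, ↓reduceIte, Sum.inr.injEq,
        Finset.sum_add_distrib, Finset.sum_ite_eq, Finset.mem_univ] at hY ⊢
      omega) (by
      intro ℓ
      have := hd ℓ
      simp only [Finsupp.add_apply, Finsupp.single_apply, reduceCtorEq, ↓reduceIte, Sum.inl.injEq,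
        Sum.inr.injEq] at this ⊢
      split_ifs at this ⊢ <;> omega)
  have hsplit : monomial (b + Finsupp.single (.inl j) 1 + Finsupp.single (.inr i) 1) (1 : k) -
      monomial (c + Finsupp.single (.inr j) 1) 1 =
      monomial b 1 * (X (.inl j) * X (.inr i) - X (.inl i) * X (.inr j)) +
        X (.inr j) * (monomial (b + Finsupp.single (.inl i) 1) 1 - monomial c 1) := by
    simp only [monomial_add_single, pow_one]
    ring
  rw [hsplit]
  exact add_mem (Ideal.mul_mem_left _ _ (X_inl_mul_X_inr_sub_mem_Jideal j i))
    (Ideal.mul_mem_left _ _ key)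

theorem linearCombination_paramExp_none (m : Fin r ⊕ Fin r →₀ ℕ) :
    Finsupp.linearCombination ℕ (paramExp p r) m none = p ^ (r - 1) * ∑ ℓ, m (.inr ℓ) := by
  simp [Finsupp.linearCombination_apply, Finsupp.sum_fintype, Fintype.sum_sum_type, paramExp,
    Finset.mul_sum, mul_comm]

theorem linearCombination_paramExp_some (m : Fin r ⊕ Fin r →₀ ℕ) (ℓ : Fin r) :
    Finsupp.linearCombination ℕ (paramExp p r) m (some ℓ) =
      p ^ (r - ℓ - 1) * (m (.inl ℓ) + m (.inr ℓ)) := by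
  simp [Finsupp.linearCombination_apply, Finsupp.sum_fintype, Fintype.sum_sum_type, paramExp,
    Finsupp.single_apply, mul_add, mul_comm]

theorem monomial_sub_monomial_mem_Jideal_of_linearCombination_paramExp_eq (hp : 0 < p)
    {m m' : Fin r ⊕ Fin r →₀ ℕ}
    (h : Finsupp.linearCombination ℕ (paramExp p r) m =
      Finsupp.linearCombination ℕ (paramExp p r) m') :
    monomial m (1 : k) - monomial m' 1 ∈ Jideal k r := by
  refine monomial_sub_monomial_mem_Jideal ?_ fun ℓ => ?_
  · have := congr($h none)
    rw [linearCombination_paramExp_none, linearCombination_paramExp_none] at this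
    exact Nat.eq_of_mul_eq_mul_left (pow_pos hp _) this
  · have := congr($h (some ℓ))
    rw [linearCombination_paramExp_some, linearCombination_paramExp_some] at this
    exact Nat.eq_of_mul_eq_mul_left (pow_pos hp _) this

theorem Qrel_le_ker_aeval_paramVal :
    Qrel k p r ≤ RingHom.ker (aeval (paramVal k p r)) := by
  rw [Qrel, Ideal.span_le]
  rintro _ ⟨ℓ, ℓ', hℓ, rfl⟩
  have hexp : (ℓ : ℕ) + (ℓ' - ℓ) = ℓ' := Nat.add_sub_cancel' hℓ.le
  simp only [SetLike.mem_coe, RingHom.mem_ker, map_sub, map_mul, map_pow, aeval_X, paramVal]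
  rw [mul_pow, ← pow_mul, ← pow_add, hexp]
  ring

variable (k p r) in
noncomputable def paramMap :
    MvPolynomial (Fin r ⊕ Fin r) k ⧸ Qrel k p r →ₐ[k] MvPolynomial (Option (Fin r)) k :=
  Ideal.Quotient.liftₐ _ (aeval (paramVal k p r)) fun _ ha => Qrel_le_ker_aeval_paramVal ha

theorem paramMap_mk (f : MvPolynomial (Fin r ⊕ Fin r) k) :
    paramMap k p r (Ideal.Quotient.mk _ f) = aeval (paramVal k p r) f :=
  rfl

theorem paramMap_comp_thetaAux :
    (paramMap k p r).comp (thetaAux k p r) = aeval fun i => monomial (paramExp p r i) 1 := by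
  refine MvPolynomial.algHom_ext fun i => ?_
  rw [AlgHom.comp_apply, thetaAux, aeval_X, aeval_X, map_pow, paramMap_mk, aeval_X]
  rcases i with ℓ | ℓ
  · simp [paramVal, paramExp, X_pow_eq_monomial]
  · have hexp : (r - ℓ - 1) + (ℓ : ℕ) = r - 1 := by omega
    simp only [paramVal, paramExp, mul_pow, X_pow_eq_monomial, monomial_pow, monomial_mul,
      Finsupp.smul_single, smul_eq_mul, one_pow, mul_one, ← pow_add, Sum.elim_inr, hexp]

theorem mem_Jideal_of_thetaAux_eq_zero (hp : 0 < p) {f : MvPolynomial (Fin r ⊕ Fin r) k}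
    (hf : thetaAux k p r f = 0) : f ∈ Jideal k r := by
  refine mem_of_map_eq_zero_of_monomial_sub_mem ((paramMap k p r).comp (thetaAux k p r)).toLinearMap
    (Finsupp.linearCombination ℕ (paramExp p r)) (fun u c => ?_)
    (fun _ _ => monomial_sub_monomial_mem_Jideal_of_linearCombination_paramExp_eq hp) ?_
  · rw [AlgHom.toLinearMap_apply, paramMap_comp_thetaAux, aeval_monomial_one_monomial]
  · simp [hf]

theorem thetaAux_X_inl_mul_X_inr_sub {ℓ ℓ' : Fin r} (h : ℓ < ℓ') :
    thetaAux k p r (X (.inl ℓ) * X (.inr ℓ') - X (.inl ℓ') * X (.inr ℓ)) = 0 := by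
  set g₁ : MvPolynomial (Fin r ⊕ Fin r) k := X (.inl ℓ) ^ p ^ (ℓ' - ℓ : ℕ) * X (.inr ℓ')
  set g₂ : MvPolynomial (Fin r ⊕ Fin r) k := X (.inr ℓ) ^ p ^ (ℓ' - ℓ : ℕ) * X (.inl ℓ')
  have hexp : r - ℓ - 1 = (ℓ' - ℓ) + (r - ℓ' - 1) := by omega
  have himage : thetaAux k p r (X (.inl ℓ) * X (.inr ℓ') - X (.inl ℓ') * X (.inr ℓ)) =
      Ideal.Quotient.mk _ (g₁ ^ p ^ (r - ℓ' - 1 : ℕ) - g₂ ^ p ^ (r - ℓ' - 1 : ℕ)) := by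
    simp only [thetaAux, g₁, g₂, map_sub, map_mul, map_pow, aeval_X, Sum.elim_inl, Sum.elim_inr,
      hexp, pow_add, pow_mul, mul_pow]
    ring
  rw [himage, Ideal.Quotient.eq_zero_iff_mem]
  exact Ideal.mem_of_dvd _ (sub_dvd_pow_sub_pow _ _ _) (Ideal.subset_span ⟨ℓ, ℓ', h, rfl⟩)

theorem injective_liftₐ_thetaAux (hp : 0 < p) (h : ∀ a ∈ Jideal k r, thetaAux k p r a = 0) :
    Function.Injective (Ideal.Quotient.liftₐ (Jideal k r) (thetaAux k p r) h) := by
  rw [injective_iff_map_eq_zero]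
  intro a ha
  obtain ⟨f, rfl⟩ := Ideal.Quotient.mk_surjective a
  exact Ideal.Quotient.eq_zero_iff_mem.2 (mem_Jideal_of_thetaAux_eq_zero hp ha)

theorem finite_liftₐ_thetaAux (hp : 0 < p) (h : ∀ a ∈ Jideal k r, thetaAux k p r a = 0) :
    (Ideal.Quotient.liftₐ (Jideal k r) (thetaAux k p r) h).Finite := by
  refine AlgHom.finite_of_pow_mem_range _ (Set.finite_range _)
    (Ideal.Quotient.adjoin_range_mk_X (Qrel k p r)) ?_
  rintro _ ⟨i, rfl⟩
  exact ⟨p ^ (r - Sum.elim Fin.val Fin.val i - 1), pow_pos hp _, Ideal.Quotient.mk _ (X i),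
    aeval_X _ i⟩

end

theorem stmt_10_general (k : Type*) [Field k] (p : ℕ) (hp : p.Prime) (r : ℕ) :
    (∀ ℓ ℓ' : Fin r, ℓ < ℓ' →
      thetaAux k p r
        (X (Sum.inl ℓ) * X (Sum.inr ℓ') - X (Sum.inl ℓ') * X (Sum.inr ℓ)) = 0) ∧
    ∀ h : ∀ a ∈ Jideal k r, thetaAux k p r a = 0,
      Function.Injective (Ideal.Quotient.liftₐ (Jideal k r) (thetaAux k p r) h) ∧
      (Ideal.Quotient.liftₐ (Jideal k r) (thetaAux k p r) h).toRingHom.Finite :=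
  ⟨fun _ _ => thetaAux_X_inl_mul_X_inr_sub,
    fun h => ⟨injective_liftₐ_thetaAux hp.pos h, finite_liftₐ_thetaAux hp.pos h⟩⟩

/-- The assignment `X_ℓ ↦ x_ℓ^{p^{r−ℓ−1}}`, `Y_ℓ ↦ y_ℓ^{p^{r−ℓ−1}}` kills every generator of
`J_r`, hence induces a `k`-algebra homomorphism `θ̄_r : B_r/J_r → Q_r`; moreover `θ̄_r` is
injective and finite (i.e. `Q_r` is a finitely generated module over the image of `θ̄_r`). -/
theorem stmt_10 (k : Type*) [Field k] [IsAlgClosed k] (p : ℕ) (hp : p.Prime)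
    (hp2 : 2 < p) [CharP k p] (r : ℕ) (hr : 1 ≤ r) :
    (∀ ℓ ℓ' : Fin r, ℓ < ℓ' →
      thetaAux k p r
        (X (Sum.inl ℓ) * X (Sum.inr ℓ') - X (Sum.inl ℓ') * X (Sum.inr ℓ)) = 0) ∧
    ∀ h : ∀ a ∈ Jideal k r, thetaAux k p r a = 0,
      Function.Injective (Ideal.Quotient.liftₐ (Jideal k r) (thetaAux k p r) h) ∧
      (Ideal.Quotient.liftₐ (Jideal k r) (thetaAux k p r) h).toRingHom.Finite :=
  stmt_10_general k p hp r
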